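/- For the dissimilarity measure N_L: if L ⊆ Σ* is not regular, then N_L(n) ≥ n/2 + 1 for infinitely many n, where N_L(n) is the maximum size of a set of strings that are pairwise n-dissimilar with respect to L. (Two strings w, w' of length ≤ n are n-dissimilar if there exists v with |wv| ≤ n, |w'v| ≤ n, and exactly one of wv, w'v is in L.) -/
import Mathlib


/-- Two strings are `n`-dissimilar w.r.t. `L` if both have length at most `n` and some
suffix `v` keeps both concatenations of length at most `n` while exactly one lands in `L`. -/
def NDissimilar {α : Type} (L : Language α) (n : ℕ) (w w' : List α) : Prop :=
  w.length ≤ n ∧ w'.length ≤ n ∧ ∃ v : List α,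
    (w ++ v).length ≤ n ∧ (w' ++ v).length ≤ n ∧ ((w ++ v) ∈ L ↔ (w' ++ v) ∉ L)

namespace NDisProof

variable {α : Type} [Fintype α] (L : Language α)

/-- The depth-`k` membership profile of a string. -/
def prof (k : ℕ) (w : List α) : {v : List α // v.length ≤ k} → Prop :=
  fun v => (w ++ v.1) ∈ L

instance (k : ℕ) : Finite {v : List α // v.length ≤ k} :=
  (List.finite_length_le α k).to_subtype

lemma ndis_symm {L : Language α} {n : ℕ} {w w' : List α} (h : NDissimilar L n w w') :
    NDissimilar L n w' w := by
  obtain ⟨h1, h2, v, h3, h4, h5⟩ := h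
  exact ⟨h2, h1, v, h4, h3, by tauto⟩

lemma dissim_of_prof_ne {n d : ℕ} {u w : List α} (hu : u.length + d ≤ n)
    (hw : w.length + d ≤ n) (h : prof L d u ≠ prof L d w) :
    NDissimilar L n u w := by
  obtain ⟨v, hv⟩ := Function.ne_iff.mp h
  refine ⟨le_trans (Nat.le_add_right _ _) hu, le_trans (Nat.le_add_right _ _) hw,
    v.1, ?_, ?_, ?_⟩
  · rw [List.length_append]
    exact le_trans (Nat.add_le_add_left v.2 _) hu
  · rw [List.length_append]
    exact le_trans (Nat.add_le_add_left v.2 _) hw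
  · have hne : ¬ ((u ++ v.1 ∈ L) ↔ (w ++ v.1 ∈ L)) := fun hiff => hv (propext hiff)
    tauto

lemma regular_of_step (k : ℕ)
    (hstep : ∀ w w' : List α, prof L k w = prof L k w' →
      prof L (k+1) w = prof L (k+1) w') :
    L.IsRegular := by
  classical
  have hmono : ∀ (j : ℕ) (w w' : List α), prof L k w = prof L k w' →
      prof L (k + j) w = prof L (k + j) w' := by
    intro j
    induction j with
    | zero => intro w w' h; exact h
    | succ j ih =>
      intro w w' h
      funext v
      obtain ⟨t, ht⟩ := v
      match t, ht with
      | [], ht =>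
        exact congrFun h ⟨[], Nat.zero_le k⟩
      | a :: t, ht =>
        have h1 : prof L k (w ++ [a]) = prof L k (w' ++ [a]) := by
          funext u
          have hlen : (a :: u.1).length ≤ k + 1 := by
            simpa using Nat.succ_le_succ u.2
          have := congrFun (hstep w w' h) ⟨a :: u.1, hlen⟩
          simpa [prof, List.append_assoc] using this
        have h2 := ih (w ++ [a]) (w' ++ [a]) h1
        have hlen : t.length ≤ k + j := by
          have := ht; simp at this; omega
        have := congrFun h2 ⟨t, hlen⟩
        simpa [prof, List.append_assoc] using this
  have hLQ : ∀ w w' : List α, prof L k w = prof L k w' →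
      ∀ v : List α, (w ++ v ∈ L) = (w' ++ v ∈ L) := by
    intro w w' h v
    exact congrFun (hmono v.length w w' h) ⟨v, Nat.le_add_left _ _⟩
  let σ := ↥(Set.range (prof L k))
  let M : DFA α σ :=
    { step := fun q a => ⟨prof L k (q.2.choose ++ [a]), Set.mem_range_self _⟩
      start := ⟨prof L k [], Set.mem_range_self _⟩
      accept := {q | q.1 ⟨[], Nat.zero_le k⟩} }
  have hrep : ∀ q : σ, prof L k q.2.choose = q.1 := fun q => q.2.choose_spec
  have key : ∀ w : List α, ∃ u : List α, (M.eval w).1 = prof L k u ∧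
      ∀ v : List α, (u ++ v ∈ L) = (w ++ v ∈ L) := by
    intro w
    induction w using List.reverseRecOn with
    | nil => exact ⟨[], rfl, fun v => rfl⟩
    | append_singleton w a ih =>
      obtain ⟨u, h1, h2⟩ := ih
      refine ⟨(M.eval w).2.choose ++ [a], ?_, ?_⟩
      · rw [DFA.eval_append_singleton]
      · intro v
        have hq : prof L k (M.eval w).2.choose = prof L k u := by
          rw [hrep (M.eval w), h1]
        calc ((M.eval w).2.choose ++ [a] ++ v ∈ L)
            = ((M.eval w).2.choose ++ (a :: v) ∈ L) := by rw [List.append_assoc]; rfl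
          _ = (u ++ (a :: v) ∈ L) := hLQ _ _ hq (a :: v)
          _ = (w ++ (a :: v) ∈ L) := h2 (a :: v)
          _ = (w ++ [a] ++ v ∈ L) := by rw [List.append_assoc]; rfl
  refine ⟨σ, Fintype.ofFinite σ, M, ?_⟩
  ext w
  obtain ⟨u, h1, h2⟩ := key w
  have hw : ((M.eval w).1 ⟨[], Nat.zero_le k⟩) = (w ∈ L) := by
    rw [h1]
    have := h2 []
    simpa [prof] using this
  rw [DFA.mem_accepts]
  exact iff_of_eq hw

lemma card_lt (hL : ¬ L.IsRegular) (k : ℕ) :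
    Nat.card ↥(Set.range (prof L k)) < Nat.card ↥(Set.range (prof L (k+1))) := by
  by_contra hc
  push_neg at hc
  apply hL
  apply regular_of_step L k
  let f : ↥(Set.range (prof L (k+1))) → ↥(Set.range (prof L k)) :=
    fun q => ⟨fun v => q.1 ⟨v.1, v.2.trans (Nat.le_succ k)⟩, by
      obtain ⟨w, hw⟩ := q.2
      exact ⟨w, by rw [← hw]; rfl⟩⟩
  have hsurj : Function.Surjective f := by
    rintro ⟨g, w, hw⟩
    exact ⟨⟨prof L (k+1) w, Set.mem_range_self _⟩, Subtype.ext hw⟩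
  have hcard : Nat.card ↥(Set.range (prof L (k+1))) = Nat.card ↥(Set.range (prof L k)) :=
    le_antisymm hc (Nat.card_le_card_of_surjective f hsurj)
  have hbij : Function.Bijective f :=
    (Nat.bijective_iff_surjective_and_card f).mpr ⟨hsurj, hcard⟩
  intro w w' h
  have heq : f ⟨prof L (k+1) w, Set.mem_range_self _⟩
      = f ⟨prof L (k+1) w', Set.mem_range_self _⟩ := by
    apply Subtype.ext
    funext v
    exact congrFun h ⟨v.1, v.2⟩
  have := hbij.1 heq
  exact congrArg Subtype.val this

lemma card_ge (hL : ¬ L.IsRegular) (k : ℕ) :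
    k + 1 ≤ Nat.card ↥(Set.range (prof L k)) := by
  induction k with
  | zero =>
    have : Nonempty ↥(Set.range (prof L 0)) := ⟨⟨prof L 0 [], Set.mem_range_self _⟩⟩
    exact Nat.card_pos
  | succ k ih => exact Nat.lt_of_le_of_lt ih (card_lt L hL k)

end NDisProof

open NDisProof in
/-- If `L` is not regular then `N_L(n) ≥ n/2 + 1` for infinitely many `n`: there are
arbitrarily large `n` admitting a set of at least `n/2 + 1` pairwise `n`-dissimilar
strings. -/
theorem nonregular_dissimilarity_lower_bound {α : Type} [Fintype α]
    (L : Language α) (hL : ¬ L.IsRegular) :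
    ∀ m : ℕ, ∃ n ≥ m, ∃ S : Finset (List α),
      (∀ w ∈ S, ∀ w' ∈ S, w ≠ w' → NDissimilar L n w w') ∧
      (n : ℝ) / 2 + 1 ≤ (S.card : ℝ) := by
  intro m
  classical
  set k := m + 1 with hk
  by_cases hA : ∀ w : List α, ∃ u : List α, u.length ≤ m ∧ prof L k u = prof L k w
  · -- all profiles have short representatives
    refine ⟨2*m+1, by omega, ?_⟩
    let T : Finset (List α) := (List.finite_length_le α m).toFinset
    have hTmem : ∀ u : List α, u ∈ T ↔ u.length ≤ m := by
      intro u; simp [T, Set.Finite.mem_toFinset]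
    let I := T.image (prof L k)
    have hIcard : m + 2 ≤ I.card := by
      have h1 : k + 1 ≤ Nat.card ↥(Set.range (prof L k)) := card_ge L hL k
      have h2 : Set.range (prof L k) ⊆ ↑I := by
        rintro g ⟨w, rfl⟩
        obtain ⟨u, hu1, hu2⟩ := hA w
        exact Finset.mem_coe.mpr (Finset.mem_image.mpr ⟨u, (hTmem u).mpr hu1, hu2⟩)
      have h3 : Nat.card ↥(Set.range (prof L k)) ≤ Nat.card ↥(↑I : Set _) :=
        Nat.card_mono (I.finite_toSet) h2
      simp only [Nat.card_coe_set_eq, Set.ncard_coe_finset] at h3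
      simp only [Nat.card_coe_set_eq] at h1
      omega
    let F : {g // g ∈ I} → List α := fun q => (Finset.mem_image.mp q.2).choose
    have hF : ∀ q : {g // g ∈ I}, F q ∈ T ∧ prof L k (F q) = q.1 := by
      intro q
      obtain ⟨hh1, hh2⟩ := (Finset.mem_image.mp q.2).choose_spec
      exact ⟨hh1, hh2⟩
    have hFinj : Function.Injective F := by
      intro q q' h
      apply Subtype.ext
      rw [← (hF q).2, ← (hF q').2, h]
    refine ⟨I.attach.image F, ?_, ?_⟩
    · intro w hw w' hw' hne
      obtain ⟨q, _, rfl⟩ := Finset.mem_image.mp hw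
      obtain ⟨q', _, rfl⟩ := Finset.mem_image.mp hw'
      refine dissim_of_prof_ne L (d := k) ?_ ?_ ?_
      · have := (hTmem _).mp (hF q).1; omega
      · have := (hTmem _).mp (hF q').1; omega
      · rw [(hF q).2, (hF q').2]
        intro h
        exact hne (congrArg F (Subtype.ext h))
    · have hScard : (I.attach.image F).card = I.card := by
        rw [Finset.card_image_of_injective _ hFinj, Finset.card_attach]
      rw [hScard]
      have hc : (m + 2 : ℝ) ≤ (I.card : ℝ) := by exact_mod_cast hIcard
      push_cast
      linarith
  · -- some profile is born at a long string
    push_neg at hA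
    obtain ⟨w₀, hw₀⟩ := hA
    have hex : ∃ ℓ, ∃ w : List α, w.length = ℓ ∧
        ∀ u : List α, u.length ≤ m → prof L k u ≠ prof L k w :=
      ⟨w₀.length, w₀, rfl, hw₀⟩
    set p := Nat.find hex with hp
    obtain ⟨w₁, hw₁len, hw₁⟩ := Nat.find_spec hex
    have hpk : m + 1 ≤ p := by
      by_contra h
      push_neg at h
      exact hw₁ w₁ (by omega) rfl
    have born : ∀ u : List α, u.length < p → prof L k u ≠ prof L k w₁ := by
      intro u hu hequ
      exact Nat.find_min hex hu ⟨u, rfl, fun u' hu' h' => hw₁ u' hu' (h'.trans hequ)⟩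
    have pborn : ∀ j, j ≤ p → ∀ u : List α, u.length < j →
        prof L (k + (p - j)) u ≠ prof L (k + (p - j)) (w₁.take j) := by
      intro j hj u hu heq
      apply born (u ++ w₁.drop j) (by
        rw [List.length_append, List.length_drop, hw₁len]; omega)
      funext v
      have hv : (w₁.drop j ++ v.1).length ≤ k + (p - j) := by
        rw [List.length_append, List.length_drop, hw₁len]
        have := v.2; omega
      have hthis := congrFun heq ⟨w₁.drop j ++ v.1, hv⟩
      simp only [prof, ← List.append_assoc] at hthis
      rw [List.take_append_drop] at hthis
      exact hthis
    have hp1 : ∀ i, i ≤ p → (w₁.take i).length = i := by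
      intro i hi; rw [List.length_take, hw₁len]; omega
    refine ⟨p + k, by omega, (Finset.range (p+1)).image (fun i => w₁.take i), ?_, ?_⟩
    · have key : ∀ i j, i < j → j ≤ p →
          NDissimilar L (p + k) (w₁.take i) (w₁.take j) := by
        intro i j hij hj
        refine dissim_of_prof_ne L (d := k + (p - j)) ?_ ?_ ?_
        · rw [hp1 i (by omega)]; omega
        · rw [hp1 j hj]; omega
        · exact pborn j hj (w₁.take i) (by rw [hp1 i (by omega)]; omega)
      intro w hw w' hw' hne
      obtain ⟨i, hi, rfl⟩ := Finset.mem_image.mp hw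
      obtain ⟨j, hj, rfl⟩ := Finset.mem_image.mp hw'
      rw [Finset.mem_range] at hi hj
      rcases lt_trichotomy i j with h | h | h
      · exact key i j h (by omega)
      · exact absurd (by rw [h]) hne
      · exact ndis_symm (key j i h (by omega))
    · have hcard : ((Finset.range (p+1)).image (fun i => w₁.take i)).card = p + 1 := by
        rw [Finset.card_image_of_injOn, Finset.card_range]
        intro i hi j hj h
        rw [Finset.mem_coe, Finset.mem_range] at hi hj
        have hlen := congrArg List.length h
        rw [hp1 i (by omega), hp1 j (by omega)] at hlen
        exact hlen
      rw [hcard]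
      have hc : (m : ℝ) + 1 ≤ (p : ℝ) := by exact_mod_cast hpk
      have hkr : (k : ℝ) = (m : ℝ) + 1 := by rw [hk]; push_cast; ring
      push_cast
      linarith
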